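/- Let A be a nonempty finite collection of nonempty finite subsets of a linearly ordered finite set V, and let T(A) be its Tchebyshev triangulation. Then the maximum k such that T(A) has a (k−1)-dimensional face equals the maximum cardinality of a face of A; in particular, dim T(A) + 1 equals the maximum number of vertices of a face of A. -/
import Mathlib

open Finset

/-- The set of vertices of the original complex underlying a vertex `(u, v)` of the
Tchebyshev triangulation: `{u, v} ∖ {1̂}`, where `1̂ = ⊤`. -/
def pairVertexSet {α : Type*} [DecidableEq α] (p : α × WithTop α) : Finset α :=
  WithTop.recTopCoe {p.1} (fun a => {p.1, a}) p.2

/-- The `(k-1)`-dimensional faces of the Tchebyshev triangulation `T(A)` of a collection `A`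
of nonempty finite subsets of a linearly ordered set `V`: sets
`{(u_1,v_1),…,(u_k,v_k)}` with `u_i ∈ V`, `v_i ∈ V ∪ {1̂}`, `u_i < v_i`, `v_1 < ⋯ < v_k`,
such that `{u_1,v_1,…,u_k,v_k} ∖ {1̂} ∈ A`, and for each `i ≤ k-1` either `u_i = u_{i+1}`
or `v_i ≤ u_{i+1}`. -/
def tchebFaces {α : Type*} [LinearOrder α] [DecidableEq α]
    (A : Finset (Finset α)) (k : ℕ) : Set (Finset (α × WithTop α)) :=
  {σ | ∃ e : Fin k → α × WithTop α,
      σ = Finset.image e Finset.univ ∧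
      StrictMono (fun i => (e i).2) ∧
      (∀ i, ((e i).1 : WithTop α) < (e i).2) ∧
      (Finset.univ.biUnion fun i => pairVertexSet (e i)) ∈ A ∧
      (∀ i j : Fin k, (i : ℕ) + 1 = (j : ℕ) →
        (e i).1 = (e j).1 ∨ (e i).2 ≤ ((e j).1 : WithTop α))}

/-- `s_j(A)`: the number of members of `A` of cardinality `j`. -/
def sCount {α : Type*} [DecidableEq α] (A : Finset (Finset α)) (j : ℕ) : ℕ :=
  (A.filter fun F => F.card = j).card

lemma fst_mem_pairVertexSet {α : Type*} [DecidableEq α] (p : α × WithTop α) :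
    p.1 ∈ pairVertexSet p := by
  obtain ⟨u, v⟩ := p
  cases v <;> simp [pairVertexSet]

lemma coe_mem_pairVertexSet {α : Type*} [DecidableEq α] (p : α × WithTop α) (a : α)
    (h : p.2 = (a : WithTop α)) : a ∈ pairVertexSet p := by
  obtain ⟨u, v⟩ := p
  simp only at h
  subst h
  simp [pairVertexSet]

lemma pairVertexSet_eq {α : Type*} [DecidableEq α] (u a : α) :
    pairVertexSet (u, (a : WithTop α)) = {u, a} := by
  simp [pairVertexSet]

lemma pairVertexSet_top {α : Type*} [DecidableEq α] (u : α) :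
    pairVertexSet (u, (⊤ : WithTop α)) = {u} := by
  simp [pairVertexSet]

/-- **Dimension of the Tchebyshev triangulation.**  For a nonempty finite collection `A` of
nonempty subsets of a linearly ordered finite set, the maximum `k` such that `T(A)` has a
`(k-1)`-dimensional face is exactly the maximum cardinality of a face of `A`; in particular
`dim T(A) + 1` equals the maximum number of vertices of a face of `A`. -/
theorem tchebFaces_dim {α : Type*} [LinearOrder α] [Fintype α] [DecidableEq α]
    (A : Finset (Finset α)) (hA : A.Nonempty) (hA' : ∀ F ∈ A, F ≠ ∅) :
    IsGreatest {k : ℕ | (tchebFaces A k).Nonempty} (A.sup Finset.card) := by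
  obtain ⟨F, hF, hFcard⟩ := Finset.exists_mem_eq_sup A hA Finset.card
  set m := A.sup Finset.card with hm
  constructor
  · -- membership: construct a face with k = m
    have hmF : F.card = m := hFcard.symm
    have hFne : F.Nonempty := Finset.nonempty_iff_ne_empty.mpr (hA' F hF)
    have hm1 : 1 ≤ m := by
      rw [← hmF]; exact Finset.card_pos.mpr hFne
    set a : Fin m → α := fun i => (F.orderIsoOfFin hmF i : α) with ha
    have hamono : StrictMono a := fun i j hij => by
      exact_mod_cast (F.orderIsoOfFin hmF).strictMono hij
    have haF : ∀ i, a i ∈ F := fun i => (F.orderIsoOfFin hmF i).2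
    set e : Fin m → α × WithTop α := fun i =>
      (a i, if h : (i : ℕ) + 1 < m then ((a ⟨(i : ℕ) + 1, h⟩ : α) : WithTop α) else ⊤)
      with he
    refine ⟨Finset.image e Finset.univ, e, rfl, ?_, ?_, ?_, ?_⟩
    · -- strict mono of second coordinates
      intro i j hij
      simp only [he]
      by_cases hj : (j : ℕ) + 1 < m
      · have hi : (i : ℕ) + 1 < m := by
          have : (i : ℕ) < (j : ℕ) := hij
          omega
        rw [dif_pos hi, dif_pos hj]
        exact_mod_cast hamono (by rw [Fin.mk_lt_mk]; omega)
      · have hi : (i : ℕ) + 1 < m := by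
          have h1 : (i : ℕ) < (j : ℕ) := hij
          have h2 : (j : ℕ) < m := j.2
          omega
        rw [dif_pos hi, dif_neg hj]
        exact WithTop.coe_lt_top _
    · -- u < v
      intro i
      simp only [he]
      by_cases hi : (i : ℕ) + 1 < m
      · rw [dif_pos hi]
        exact_mod_cast hamono (show i < ⟨(i:ℕ)+1, hi⟩ by simp only [Fin.lt_def, Fin.val_mk]; omega)
      · rw [dif_neg hi]
        exact WithTop.coe_lt_top _
    · -- union is F
      have : (Finset.univ.biUnion fun i => pairVertexSet (e i)) = F := by
        apply Finset.Subset.antisymm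
        · intro x hx
          rw [Finset.mem_biUnion] at hx
          obtain ⟨i, _, hx⟩ := hx
          simp only [he] at hx
          by_cases hi : (i : ℕ) + 1 < m
          · rw [dif_pos hi, pairVertexSet_eq] at hx
            rcases Finset.mem_insert.mp hx with h | h
            · rw [h]; exact haF i
            · rw [Finset.mem_singleton.mp h]; exact haF _
          · rw [dif_neg hi, pairVertexSet_top] at hx
            rw [Finset.mem_singleton.mp hx]; exact haF i
        · intro x hx
          rw [Finset.mem_biUnion]
          set i := (F.orderIsoOfFin hmF).symm ⟨x, hx⟩ with hi
          refine ⟨i, Finset.mem_univ _, ?_⟩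
          have hxa : a i = x := by
            simp only [ha, hi, OrderIso.apply_symm_apply]
          have : (e i).1 = x := by simp [he, hxa]
          rw [← this]
          exact fst_mem_pairVertexSet _
      rw [this]; exact hF
    · -- chain condition
      intro i j hij
      right
      have hi : (i : ℕ) + 1 < m := by rw [hij]; exact j.2
      simp only [he, dif_pos hi]
      have : (⟨(i : ℕ) + 1, hi⟩ : Fin m) = j := by
        ext; exact hij
      rw [this]
  · -- upper bound
    rintro k ⟨σ, e, hσ, hmono, hlt, hmem, hchain⟩
    set G := Finset.univ.biUnion fun i => pairVertexSet (e i) with hG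
    have hGcard : G.card ≤ m := Finset.le_sup hmem
    refine le_trans ?_ hGcard
    rcases Nat.eq_zero_or_pos k with h0 | hk0
    · omega
    set g : Fin k → WithTop α := fun i =>
      if h : (i : ℕ) = 0 then ((e i).1 : WithTop α)
      else (e ⟨(i : ℕ) - 1, by omega⟩).2 with hg
    have hgmono : StrictMono g := by
      intro i j hij
      have hij' : (i : ℕ) < (j : ℕ) := hij
      simp only [hg]
      have hj0 : ¬ (j : ℕ) = 0 := by omega
      rw [dif_neg hj0]
      by_cases hi0 : (i : ℕ) = 0
      · rw [dif_pos hi0]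
        calc ((e i).1 : WithTop α) < (e i).2 := hlt i
          _ ≤ (e ⟨(j : ℕ) - 1, by omega⟩).2 :=
            hmono.monotone (by simp [Fin.le_def]; omega)
      · rw [dif_neg hi0]
        exact hmono (by simp [Fin.lt_def]; omega)
    have hgmem : ∀ i : Fin k, g i ∈ G.image (fun x : α => (x : WithTop α)) := by
      intro i
      simp only [hg]
      by_cases hi0 : (i : ℕ) = 0
      · rw [dif_pos hi0]
        refine Finset.mem_image_of_mem _ ?_
        rw [hG, Finset.mem_biUnion]
        exact ⟨i, Finset.mem_univ _, fst_mem_pairVertexSet _⟩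
      · rw [dif_neg hi0]
        set j : Fin k := ⟨(i : ℕ) - 1, by omega⟩ with hj
        have hjv : (e j).2 < ⊤ := lt_of_lt_of_le (hmono (show j < i by simp [hj, Fin.lt_def]; omega)) le_top
        obtain ⟨b, hb⟩ := WithTop.ne_top_iff_exists.mp hjv.ne
        rw [← hb]
        refine Finset.mem_image_of_mem _ ?_
        rw [hG, Finset.mem_biUnion]
        exact ⟨j, Finset.mem_univ _, coe_mem_pairVertexSet _ _ hb.symm⟩
    calc k = (Finset.univ : Finset (Fin k)).card := by simp
      _ ≤ (G.image (fun x : α => (x : WithTop α))).card :=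
          Finset.card_le_card_of_injOn g (fun i _ => hgmem i)
            (fun i _ j _ h => hgmono.injective h)
      _ = G.card := Finset.card_image_of_injective _ WithTop.coe_injective
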